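/- Let 𝒜 be a prime unital ∗-algebra over ℂ containing a nontrivial projection P₁, and let Φ : 𝒜 → 𝒜 be a nonlinear ⋄-derivation such that Φ(I/2) and Φ(iI/2) are self-adjoint. Then Φ preserves the star operation: Φ(A*) = Φ(A)* for every A ∈ 𝒜. -/

import Mathlib

/-!
Write `h = ½·1` and `k = (i/2)·1`. Then `h ⋄ k = k`, so the derivation rule together with the
self-adjointness of `Φ h` and `Φ k` forces `Φ k = i Φ h`, and self-adjointness once more gives
`Φ h = Φ k = 0`. For `c` with `Φ c = 0` the rule reduces to `Φ (A ⋄ c) = Φ A ⋄ c` and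
`Φ (c ⋄ A) = c ⋄ Φ A`. Since `A ⋄ h = h ⋄ A*` and `A ⋄ k = A* ⋄ k`, this gives
`Φ(A)* - Φ(A) = Φ(A*) - Φ(A*)*` and `Φ(A)* + Φ(A) = Φ(A*)* + Φ(A*)`; add them.
-/

open ComplexConjugate

section Diamond

variable {𝒜 : Type*} [Ring 𝒜] [StarRing 𝒜]

def diamond (A B : 𝒜) : 𝒜 := star A * B - star B * A

local infixl:70 " ⋄ " => diamond

def IsDiamondDerivation (Φ : 𝒜 → 𝒜) : Prop :=
  ∀ A B : 𝒜, Φ (A ⋄ B) = Φ A ⋄ B + A ⋄ Φ B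

@[simp]
theorem diamond_zero (A : 𝒜) : A ⋄ 0 = 0 := by simp [diamond]

@[simp]
theorem zero_diamond (A : 𝒜) : 0 ⋄ A = 0 := by simp [diamond]

namespace IsDiamondDerivation

variable {Φ : 𝒜 → 𝒜}

theorem map_diamond_right_of_map_eq_zero (hΦ : IsDiamondDerivation Φ) {c : 𝒜} (hc : Φ c = 0)
    (A : 𝒜) : Φ (A ⋄ c) = Φ A ⋄ c := by
  simp [hΦ A c, hc]

theorem map_diamond_left_of_map_eq_zero (hΦ : IsDiamondDerivation Φ) {c : 𝒜} (hc : Φ c = 0)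
    (A : 𝒜) : Φ (c ⋄ A) = c ⋄ Φ A := by
  simp [hΦ c A, hc]

end IsDiamondDerivation

variable [Algebra ℂ 𝒜] [StarModule ℂ 𝒜]

theorem diamond_smul_one (A : 𝒜) (z : ℂ) : A ⋄ z • (1 : 𝒜) = z • star A - conj z • A := by
  simp [diamond, star_smul]

theorem smul_one_diamond (z : ℂ) (A : 𝒜) : z • (1 : 𝒜) ⋄ A = conj z • A - z • star A := by
  simp [diamond, star_smul]

theorem diamond_smul_one_eq_smul_one_diamond_star {z : ℂ} (hz : conj z = z) (A : 𝒜) :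
    A ⋄ z • (1 : 𝒜) = z • (1 : 𝒜) ⋄ star A := by
  rw [diamond_smul_one, smul_one_diamond, hz, star_star]

theorem star_diamond_smul_one {z : ℂ} (hz : conj z = -z) (A : 𝒜) :
    star A ⋄ z • (1 : 𝒜) = A ⋄ z • (1 : 𝒜) := by
  rw [diamond_smul_one, diamond_smul_one, hz, star_star]
  module

theorem star_eq_of_diamond_half_eq {X Y : 𝒜}
    (hre : X ⋄ ((1 : ℂ) / 2) • (1 : 𝒜) = ((1 : ℂ) / 2) • (1 : 𝒜) ⋄ Y)
    (him : X ⋄ (Complex.I / 2) • (1 : 𝒜) = Y ⋄ (Complex.I / 2) • (1 : 𝒜)) :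
    star X = Y := by
  rw [diamond_smul_one, smul_one_diamond] at hre
  rw [diamond_smul_one, diamond_smul_one] at him
  simp only [map_div₀, map_one, map_ofNat, Complex.conj_I, neg_div, neg_smul,
    sub_neg_eq_add] at hre him
  rw [← smul_sub, ← smul_sub] at hre
  rw [← smul_add, ← smul_add] at him
  have hskew : star X - X = Y - star Y :=
    smul_right_injective 𝒜 (by norm_num : (1 / 2 : ℂ) ≠ 0) hre
  have hsa : star X + X = star Y + Y :=
    smul_right_injective 𝒜 (by simp : (Complex.I / 2 : ℂ) ≠ 0) him
  apply smul_right_injective 𝒜 (two_ne_zero : (2 : ℂ) ≠ 0)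
  calc (2 : ℂ) • star X = (star X - X) + (star X + X) := by module
    _ = (Y - star Y) + (star Y + Y) := by rw [hskew, hsa]
    _ = (2 : ℂ) • Y := by module

theorem IsDiamondDerivation.map_half_eq_zero {Φ : 𝒜 → 𝒜} (hΦ : IsDiamondDerivation Φ)
    (h1 : IsSelfAdjoint (Φ (((1 : ℂ) / 2) • (1 : 𝒜))))
    (h2 : IsSelfAdjoint (Φ ((Complex.I / 2) • (1 : 𝒜)))) :
    Φ (((1 : ℂ) / 2) • (1 : 𝒜)) = 0 ∧ Φ ((Complex.I / 2) • (1 : 𝒜)) = 0 := by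
  set h : 𝒜 := ((1 : ℂ) / 2) • 1
  set k : 𝒜 := (Complex.I / 2) • 1
  have hk : h ⋄ k = k := by
    simp only [h, k, diamond_smul_one, star_smul, star_one, map_div₀, map_one, map_ofNat,
      Complex.conj_I, Complex.star_def, smul_smul]
    module
  have hΦk : Φ k = Complex.I • Φ h := by
    have := hΦ h k
    rw [hk, diamond_smul_one, smul_one_diamond, h1.star_eq, h2.star_eq] at this
    simp only [map_div₀, map_one, map_ofNat, Complex.conj_I] at this
    rw [this]
    module
  have hΦh : Φ h = 0 := by
    have := h2.star_eq
    rw [hΦk, star_smul, h1.star_eq, Complex.star_def, Complex.conj_I, neg_smul,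
      neg_eq_iff_add_eq_zero, ← two_smul ℂ, smul_smul] at this
    exact (smul_eq_zero.mp this).resolve_left (by simp)
  exact ⟨hΦh, by rw [hΦk, hΦh, smul_zero]⟩

end Diamond

theorem stmt13_general {𝒜 : Type*} [Ring 𝒜] [Algebra ℂ 𝒜] [StarRing 𝒜] [StarModule ℂ 𝒜]
    (Φ : 𝒜 → 𝒜)
    (hΦ : ∀ A B : 𝒜, Φ (star A * B - star B * A) =
      (star (Φ A) * B - star B * Φ A) + (star A * Φ B - star (Φ B) * A))
    (h1 : star (Φ (((1 : ℂ)/2) • (1 : 𝒜))) = Φ (((1 : ℂ)/2) • (1 : 𝒜)))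
    (h2 : star (Φ ((Complex.I/2) • (1 : 𝒜))) = Φ ((Complex.I/2) • (1 : 𝒜))) :
    ∀ A : 𝒜, Φ (star A) = star (Φ A) := by
  intro A
  have hΦ : IsDiamondDerivation Φ := hΦ
  obtain ⟨hre, him⟩ := hΦ.map_half_eq_zero h1 h2
  refine (star_eq_of_diamond_half_eq ?_ ?_).symm
  · rw [← hΦ.map_diamond_right_of_map_eq_zero hre, ← hΦ.map_diamond_left_of_map_eq_zero hre,
      diamond_smul_one_eq_smul_one_diamond_star (by simp [map_ofNat])]
  · rw [← hΦ.map_diamond_right_of_map_eq_zero him, ← hΦ.map_diamond_right_of_map_eq_zero him,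
      star_diamond_smul_one (by simp [map_ofNat, neg_div])]

/-- In a prime unital ∗-algebra over `ℂ` containing a nontrivial
projection `P₁`, a nonlinear `⋄`-derivation `Φ` with `Φ(I/2)`, `Φ(iI/2)` self-adjoint
preserves the star operation: `Φ(A*) = Φ(A)*`. -/
theorem stmt13 {𝒜 : Type*} [Ring 𝒜] [Algebra ℂ 𝒜] [StarRing 𝒜] [StarModule ℂ 𝒜]
    (hprime : ∀ a b : 𝒜, (∀ x : 𝒜, a * x * b = 0) → a = 0 ∨ b = 0)
    (P₁ : 𝒜) (hP₁star : star P₁ = P₁) (hP₁idem : P₁ * P₁ = P₁)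
    (hP₁ne0 : P₁ ≠ 0) (hP₁ne1 : P₁ ≠ 1)
    (Φ : 𝒜 → 𝒜)
    (hΦ : ∀ A B : 𝒜, Φ (star A * B - star B * A) =
      (star (Φ A) * B - star B * Φ A) + (star A * Φ B - star (Φ B) * A))
    (h1 : star (Φ (((1 : ℂ)/2) • (1 : 𝒜))) = Φ (((1 : ℂ)/2) • (1 : 𝒜)))
    (h2 : star (Φ ((Complex.I/2) • (1 : 𝒜))) = Φ ((Complex.I/2) • (1 : 𝒜))) :
    ∀ A : 𝒜, Φ (star A) = star (Φ A) :=
  stmt13_general Φ hΦ h1 h2
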